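/- arXiv:2210.06447 — 2 statements merged into one kernel-verified Lean document; each statement's English description precedes it below -/
import Mathlib

section
/- Let g : ℝ^d → ℝ be C² with ∇g(x) ≠ 0, D(x) = I - ∇g(x)∇g(x)ᵀ/‖∇g(x)‖², and r(x) = ∇·D(x). Then ⟨∇g(x), r(x)⟩ + tr(D(x) ∇²g(x) D(x)) = 0. -/
/-!
Write `a = ∇g(x)`, `n = ‖a‖²` and `J` for the Jacobian of `∇g` at `x`, so that `H = Jᵀ`.
Differentiating `D_ij = δ_ij - a_i a_j / n` entrywise gives
`r = (2 aᵀJa / n² - tr J / n) a - Ja / n`, hence `⟨a, r⟩ = aᵀJa / n - tr J`.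
On the other hand `D` is idempotent, so `tr (D H D) = tr (D H) = tr J - aᵀJa / n`.
-/

open scoped RealInnerProductSpace

open Matrix

section Algebra

variable {𝕜 ι : Type*} [Field 𝕜] [Fintype ι] [DecidableEq ι]

noncomputable def projPerp (a : ι → 𝕜) : Matrix ι ι 𝕜 :=
  1 - (a ⬝ᵥ a)⁻¹ • vecMulVec a a

lemma projPerp_apply (a : ι → 𝕜) (i j : ι) :
    projPerp a i j = (if i = j then 1 else 0) - (a ⬝ᵥ a)⁻¹ * (a i * a j) := by
  simp [projPerp, one_apply, vecMulVec_apply]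

lemma projPerp_mul_self {a : ι → 𝕜} (ha : a ⬝ᵥ a ≠ 0) :
    projPerp a * projPerp a = projPerp a := by
  simp only [projPerp, sub_mul, mul_sub, one_mul, mul_one, smul_mul_smul_comm,
    vecMulVec_mul_vecMulVec, vecMulVec_smul, smul_smul]
  rw [mul_assoc, inv_mul_cancel₀ ha, mul_one]
  abel

lemma trace_projPerp_mul_mul_projPerp {a : ι → 𝕜} (ha : a ⬝ᵥ a ≠ 0) (H : Matrix ι ι 𝕜) :
    trace (projPerp a * H * projPerp a) = trace H - (a ⬝ᵥ a)⁻¹ * (a ⬝ᵥ (a ᵥ* H)) := by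
  rw [trace_mul_cycle, projPerp_mul_self ha, projPerp, sub_mul, one_mul, trace_sub,
    smul_mul_assoc, trace_smul, vecMulVec_mul, trace_vecMulVec, smul_eq_mul]

end Algebra

section Calculus

variable {𝕜 ι E : Type*} [NontriviallyNormedField 𝕜] [Fintype ι] [DecidableEq ι]
  [NormedAddCommGroup E] [NormedSpace 𝕜 E]

/-- For `v` the standard basis this is the divergence `∇·M` of the paper, taken row by row. -/
noncomputable def rowDiv (M : E → Matrix ι ι 𝕜) (x : E) (v : ι → E) : ι → 𝕜 :=
  fun i => ∑ j, fderiv 𝕜 (fun y => M y i j) x (v j)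

variable {u : E → ι → 𝕜} {u' : ι → E →L[𝕜] 𝕜} {x : E}

lemma hasFDerivAt_projPerp_apply (hu : ∀ k, HasFDerivAt (fun y => u y k) (u' k) x)
    (hx : u x ⬝ᵥ u x ≠ 0) (i j : ι) :
    HasFDerivAt (fun y => projPerp (u y) i j)
      ((2 * ((u x ⬝ᵥ u x) ^ 2)⁻¹ * (u x i * u x j)) • ∑ k, u x k • u' k -
        (u x ⬝ᵥ u x)⁻¹ • (u x j • u' i + u x i • u' j)) x := by
  have hN : HasFDerivAt (fun y => u y ⬝ᵥ u y) (∑ k, (u x k • u' k + u x k • u' k)) x :=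
    HasFDerivAt.fun_sum fun k _ => (hu k).mul (hu k)
  have := (hasFDerivAt_const (if i = j then (1 : 𝕜) else 0) x).fun_sub
    (((hasFDerivAt_inv hx).comp x hN).fun_mul ((hu i).fun_mul (hu j)))
  simp only [projPerp_apply]
  refine this.congr_fderiv ?_
  ext w
  simp only [_root_.sub_apply, _root_.add_apply, _root_.smul_apply, _root_.sum_apply,
    ContinuousLinearMap.comp_apply, ContinuousLinearMap.toSpanSingleton_apply, _root_.zero_apply,
    Function.comp_apply, Finset.sum_add_distrib, smul_eq_mul]
  ring

lemma rowDiv_projPerp (hu : ∀ k, HasFDerivAt (fun y => u y k) (u' k) x)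
    (hx : u x ⬝ᵥ u x ≠ 0) (v : ι → E) :
    rowDiv (fun y => projPerp (u y)) x v =
      (2 * ((u x ⬝ᵥ u x) ^ 2)⁻¹ * (u x ᵥ* of (fun i j => u' i (v j)) ⬝ᵥ u x) -
          (u x ⬝ᵥ u x)⁻¹ * trace (of fun i j => u' i (v j))) • u x -
        (u x ⬝ᵥ u x)⁻¹ • (of (fun i j => u' i (v j)) *ᵥ u x) := by
  ext i
  simp only [rowDiv, (hasFDerivAt_projPerp_apply hu hx i _).fderiv]
  generalize u x ⬝ᵥ u x = n
  simp only [_root_.sub_apply, _root_.add_apply, _root_.smul_apply, _root_.sum_apply, smul_eq_mul,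
    Pi.sub_apply, Pi.smul_apply, vecMul, mulVec, dotProduct, trace, diag, of_apply,
    mul_add, sub_mul, Finset.mul_sum, Finset.sum_mul, Finset.sum_sub_distrib,
    Finset.sum_add_distrib]
  simp only [mul_assoc, mul_comm, mul_left_comm]
  ring

theorem dotProduct_rowDiv_projPerp_add_trace (hu : ∀ k, HasFDerivAt (fun y => u y k) (u' k) x)
    (hx : u x ⬝ᵥ u x ≠ 0) (v : ι → E) :
    u x ⬝ᵥ rowDiv (fun y => projPerp (u y)) x v +
      trace (projPerp (u x) * (of fun i j => u' i (v j))ᵀ * projPerp (u x)) = 0 := by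
  rw [rowDiv_projPerp hu hx, trace_projPerp_mul_mul_projPerp hx, trace_transpose,
    vecMul_transpose, dotProduct_sub, dotProduct_smul, dotProduct_smul, smul_eq_mul, smul_eq_mul,
    dotProduct_mulVec, dotProduct_comm (u x)]
  field_simp
  ring

end Calculus

lemma EuclideanSpace.gradient_apply {ι : Type*} [Fintype ι] [DecidableEq ι]
    (f : EuclideanSpace ℝ ι → ℝ) (y : EuclideanSpace ℝ ι) (i : ι) :
    gradient f y i = fderiv ℝ f y (EuclideanSpace.single i 1) := by
  rw [← inner_gradient_left, EuclideanSpace.inner_single_right, one_mul, conj_trivial]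

lemma EuclideanSpace.real_norm_sq_eq_dotProduct {ι : Type*} [Fintype ι] (v : EuclideanSpace ℝ ι) :
    ‖v‖ ^ 2 = (fun i => v i) ⬝ᵥ (fun i => v i) := by
  rw [EuclideanSpace.real_norm_sq_eq]
  simp only [dotProduct, sq]

theorem stmt_5 (d : ℕ) (g : EuclideanSpace ℝ (Fin d) → ℝ)
    (x : EuclideanSpace ℝ (Fin d))
    (hg : ContDiff ℝ 2 g)
    (hn : ∀ y, gradient g y ≠ 0)
    (D : EuclideanSpace ℝ (Fin d) → Matrix (Fin d) (Fin d) ℝ)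
    (hD : ∀ y, D y = 1 - (‖gradient g y‖ ^ 2)⁻¹ •
      Matrix.vecMulVec (fun i => gradient g y i) (fun i => gradient g y i))
    (e : Fin d → EuclideanSpace ℝ (Fin d))
    (he : ∀ j, e j = EuclideanSpace.single j (1 : ℝ))
    (H : Matrix (Fin d) (Fin d) ℝ)
    (hH : ∀ i j, H i j = fderiv ℝ (fun y => fderiv ℝ g y (e j)) x (e i))
    (r : Fin d → ℝ)
    (hr : ∀ i, r i = ∑ j, fderiv ℝ (fun y => D y i j) x (e j)) :
    (∑ i, gradient g x i * r i) + Matrix.trace (D x * H * D x) = 0 := by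
  set u : EuclideanSpace ℝ (Fin d) → Fin d → ℝ := fun y i => gradient g y i
  have hu_apply : ∀ k, (fun y => u y k) = fun y => fderiv ℝ g y (e k) := fun k =>
    funext fun y => by rw [he, ← EuclideanSpace.gradient_apply]
  have hu : ∀ k, HasFDerivAt (fun y => u y k) (fderiv ℝ (fun y => fderiv ℝ g y (e k)) x) x := by
    intro k
    rw [hu_apply]
    exact (((hg.fderiv_right le_rfl).clm_apply contDiff_const).differentiable one_ne_zero
      x).hasFDerivAt
  have hx : u x ⬝ᵥ u x ≠ 0 := by
    rw [← EuclideanSpace.real_norm_sq_eq_dotProduct]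
    exact pow_ne_zero 2 (norm_ne_zero_iff.2 (hn x))
  have hDu : D = fun y => projPerp (u y) := funext fun y => by
    rw [hD, projPerp, EuclideanSpace.real_norm_sq_eq_dotProduct]
  have hHu : H = (of fun i j => fderiv ℝ (fun y => fderiv ℝ g y (e i)) x (e j))ᵀ :=
    ext fun i j => hH i j
  have hru : r = rowDiv D x e := funext hr
  rw [hHu, hru, hDu]
  exact dotProduct_rowDiv_projPerp_add_trace hu hx e
end

section
/- Let π be a smooth positive density on ℝ^d, g : ℝ^d → ℝ smooth, z ∈ ℝ, η > 0, and define π_{η,z}(x) ∝ π(x) exp(-(g(x)-z)²/(2η)). Then for any smooth compactly supported vector field φ with ⟨φ(x), ∇g(x)⟩ = 0 for all x, E_{π_{η,z}}[⟨s_π(x), φ(x)⟩ + ∇·φ(x)] = 0, where s_π = ∇log π. -/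
open MeasureTheory
open scoped RealInnerProductSpace

lemma aux_sum_single (d : ℕ) (y : EuclideanSpace ℝ (Fin d)) :
    ∑ i, y i • EuclideanSpace.single i (1:ℝ) = y := by
  ext j
  rw [WithLp.ofLp_sum, Finset.sum_apply]
  simp [EuclideanSpace.single_apply]

lemma aux_inner_gradient {d : ℕ} (f : EuclideanSpace ℝ (Fin d) → ℝ)
    (x v : EuclideanSpace ℝ (Fin d)) :
    ⟪gradient f x, v⟫ = fderiv ℝ f x v := by
  rw [gradient]
  exact InnerProductSpace.toDual_symm_apply

lemma aux_integral_fderiv_zero {d : ℕ} (G : EuclideanSpace ℝ (Fin d) → ℝ)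
    (hG : ContDiff ℝ 1 G) (hGs : HasCompactSupport G) (v : EuclideanSpace ℝ (Fin d)) :
    ∫ x, fderiv ℝ G x v = 0 := by
  obtain ⟨C, hC⟩ := ContDiff.lipschitzWith_of_hasCompactSupport hGs hG one_ne_zero
  have h := LipschitzWith.integral_lineDeriv_mul_eq (μ := volume)
      (LipschitzWith.const (α := EuclideanSpace ℝ (Fin d)) (1:ℝ)) hC hGs (-v)
  have hc : ∀ x : EuclideanSpace ℝ (Fin d),
      lineDeriv ℝ (fun _ : EuclideanSpace ℝ (Fin d) => (1:ℝ)) x (-v) = 0 := fun x => by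
    rw [(differentiableAt_const _).lineDeriv_eq_fderiv]; simp
  simp only [hc, zero_mul, integral_zero, mul_one, neg_neg] at h
  have hd : ∀ x, lineDeriv ℝ G x v = fderiv ℝ G x v := fun x =>
    ((hG.differentiable one_ne_zero) x).lineDeriv_eq_fderiv
  simp only [hd] at h
  exact h.symm

theorem stmt_14 (d : ℕ)
    (πd : EuclideanSpace ℝ (Fin d) → ℝ)
    (g : EuclideanSpace ℝ (Fin d) → ℝ) (z η : ℝ) (hη : 0 < η)
    (hπ : ContDiff ℝ 1 πd) (hπ_pos : ∀ x, 0 < πd x) (hπ_one : ∫ x, πd x = 1)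
    (hg : ContDiff ℝ (⊤ : ℕ∞) g)
    (φ : EuclideanSpace ℝ (Fin d) → EuclideanSpace ℝ (Fin d))
    (hφ : ContDiff ℝ 1 φ) (hφ_supp : HasCompactSupport φ)
    (horth : ∀ x, ⟪φ x, gradient g x⟫ = 0) :
    ∫ x, (⟪gradient (fun y => Real.log (πd y)) x, φ x⟫
        + ∑ i, fderiv ℝ φ x (EuclideanSpace.single i (1:ℝ)) i)
      * (πd x * Real.exp (-(g x - z) ^ 2 / (2 * η))) = 0 := by
  set w : EuclideanSpace ℝ (Fin d) → ℝ :=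
    fun x => πd x * Real.exp (-(g x - z) ^ 2 / (2 * η)) with hw_def
  have hg1 : ContDiff ℝ 1 g := hg.of_le (by simp)
  have hexp : ContDiff ℝ 1 (fun x : EuclideanSpace ℝ (Fin d) =>
      Real.exp (-(g x - z) ^ 2 / (2 * η))) :=
    Real.contDiff_exp.comp ((((hg1.sub contDiff_const).pow 2).neg).div_const (2 * η))
  have hwC : ContDiff ℝ 1 w := hπ.mul hexp
  have hφiC : ∀ i : Fin d, ContDiff ℝ 1 (fun x => φ x i) := fun i =>
    (EuclideanSpace.proj (𝕜 := ℝ) i).contDiff.comp hφ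
  have hDiC : ∀ i : Fin d, ContDiff ℝ 1 (fun x => w x * φ x i) := fun i =>
    hwC.mul (hφiC i)
  have hDiS : ∀ i : Fin d, HasCompactSupport (fun x => w x * φ x i) := fun i => by
    have h1 : HasCompactSupport (fun x => φ x i) :=
      hφ_supp.comp_left (g := fun v : EuclideanSpace ℝ (Fin d) => v i) rfl
    exact h1.mul_left
  -- pointwise identity
  have key : ∀ x : EuclideanSpace ℝ (Fin d),
      (⟪gradient (fun y => Real.log (πd y)) x, φ x⟫
        + ∑ i, fderiv ℝ φ x (EuclideanSpace.single i (1:ℝ)) i)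
        * (πd x * Real.exp (-(g x - z) ^ 2 / (2 * η)))
      = ∑ i, fderiv ℝ (fun y => w y * φ y i) x (EuclideanSpace.single i (1:ℝ)) := by
    intro x
    have hπx : πd x ≠ 0 := (hπ_pos x).ne'
    set c : ℝ := Real.exp (-(g x - z) ^ 2 / (2 * η)) with hc_def
    have hπd : HasFDerivAt πd (fderiv ℝ πd x) x := (hπ.differentiable one_ne_zero x).hasFDerivAt
    have hgd : HasFDerivAt g (fderiv ℝ g x) x := (hg.differentiable (by simp) x).hasFDerivAt
    have hφd : HasFDerivAt φ (fderiv ℝ φ x) x := (hφ.differentiable one_ne_zero x).hasFDerivAt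
    have h3 : HasFDerivAt (fun y => -(g y - z) ^ 2 / (2 * η))
        ((-(g x - z) / η) • fderiv ℝ g x) x := by
      have hsq : HasFDerivAt (fun y => (g y - z) ^ 2)
          ((g x - z) • fderiv ℝ g x + (g x - z) • fderiv ℝ g x) x := by
        have := (hgd.sub_const z).mul (hgd.sub_const z)
        simp only [sq]; exact this
      have h2 := (hsq.neg).const_mul (2 * η)⁻¹
      have hfun : (fun y => -(g y - z) ^ 2 / (2 * η))
          = fun y => (2 * η)⁻¹ * (-(g y - z) ^ 2) := by
        funext y; rw [div_eq_inv_mul]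
      rw [hfun]
      refine h2.congr_fderiv ?_
      ext v
      simp only [ContinuousLinearMap.smul_apply,
        ContinuousLinearMap.neg_apply, ContinuousLinearMap.add_apply, smul_eq_mul]
      ring
    have hE : HasFDerivAt (fun y => Real.exp (-(g y - z) ^ 2 / (2 * η)))
        (c • ((-(g x - z) / η) • fderiv ℝ g x)) x := h3.exp
    have hw : HasFDerivAt w
        (πd x • (c • ((-(g x - z) / η) • fderiv ℝ g x)) + c • fderiv ℝ πd x) x :=
      hπd.mul hE
    have hφi : ∀ i : Fin d, HasFDerivAt (fun y => φ y i)
        ((EuclideanSpace.proj (𝕜 := ℝ) i).comp (fderiv ℝ φ x)) x := fun i =>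
      ((EuclideanSpace.proj (𝕜 := ℝ) i).hasFDerivAt).comp x hφd
    have hDi : ∀ i : Fin d, fderiv ℝ (fun y => w y * φ y i) x
        = w x • ((EuclideanSpace.proj (𝕜 := ℝ) i).comp (fderiv ℝ φ x))
          + φ x i • (πd x • (c • ((-(g x - z) / η) • fderiv ℝ g x)) + c • fderiv ℝ πd x) :=
      fun i => (hw.mul (hφi i)).fderiv
    have hgφ : fderiv ℝ g x (φ x) = 0 := by
      rw [← aux_inner_gradient g x (φ x), real_inner_comm]
      exact horth x
    have hlog : ⟪gradient (fun y => Real.log (πd y)) x, φ x⟫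
        = (πd x)⁻¹ * fderiv ℝ πd x (φ x) := by
      rw [aux_inner_gradient, (hπd.log hπx).fderiv]
      simp
    have hsum : ∀ (L : EuclideanSpace ℝ (Fin d) →L[ℝ] ℝ),
        ∑ i, φ x i * L (EuclideanSpace.single i (1:ℝ)) = L (φ x) := by
      intro L
      rw [← aux_sum_single d (φ x), map_sum]
      simp [aux_sum_single]
    have step : ∑ i, fderiv ℝ (fun y => w y * φ y i) x (EuclideanSpace.single i (1:ℝ))
        = ∑ i, (w x * (fderiv ℝ φ x (EuclideanSpace.single i (1:ℝ)) i)
            + φ x i * (πd x * (c * ((-(g x - z) / η)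
                * fderiv ℝ g x (EuclideanSpace.single i (1:ℝ))))
              + c * fderiv ℝ πd x (EuclideanSpace.single i (1:ℝ)))) := by
      congr 1; ext i
      rw [hDi i]
      simp only [ContinuousLinearMap.add_apply, ContinuousLinearMap.smul_apply,
        ContinuousLinearMap.coe_comp', Function.comp_apply, smul_eq_mul,
        PiLp.proj_apply]
    rw [step, hlog, Finset.sum_add_distrib]
    have e12 : ∑ i, φ x i * (πd x * (c * ((-(g x - z) / η)
          * fderiv ℝ g x (EuclideanSpace.single i (1:ℝ))))
        + c * fderiv ℝ πd x (EuclideanSpace.single i (1:ℝ)))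
        = c * fderiv ℝ πd x (φ x) := by
      have h := hsum ((πd x * (c * (-(g x - z) / η))) • fderiv ℝ g x + c • fderiv ℝ πd x)
      simp only [ContinuousLinearMap.add_apply, ContinuousLinearMap.smul_apply,
        smul_eq_mul] at h
      calc ∑ i, φ x i * (πd x * (c * ((-(g x - z) / η)
            * fderiv ℝ g x (EuclideanSpace.single i (1:ℝ))))
          + c * fderiv ℝ πd x (EuclideanSpace.single i (1:ℝ)))
          = ∑ i, φ x i * ((πd x * (c * (-(g x - z) / η)))
              * fderiv ℝ g x (EuclideanSpace.single i (1:ℝ))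
            + c * fderiv ℝ πd x (EuclideanSpace.single i (1:ℝ))) := by
            congr 1; ext i; ring
        _ = (πd x * (c * (-(g x - z) / η))) * fderiv ℝ g x (φ x)
            + c * fderiv ℝ πd x (φ x) := h
        _ = c * fderiv ℝ πd x (φ x) := by rw [hgφ]; ring
    rw [e12, ← Finset.mul_sum]
    have hwx : w x = πd x * c := rfl
    rw [hwx]
    field_simp
    ring
  rw [integral_congr_ae (Filter.Eventually.of_forall key)]
  have hInt : ∀ i : Fin d, Integrable
      (fun x => fderiv ℝ (fun y => w y * φ y i) x (EuclideanSpace.single i (1:ℝ))) := by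
    intro i
    have hcont : Continuous (fun x => fderiv ℝ (fun y => w y * φ y i) x
        (EuclideanSpace.single i (1:ℝ))) :=
      ((hDiC i).continuous_fderiv one_ne_zero).clm_apply continuous_const
    have hsupp : HasCompactSupport (fun x => fderiv ℝ (fun y => w y * φ y i) x
        (EuclideanSpace.single i (1:ℝ))) :=
      ((hDiS i).fderiv ℝ).comp_left
        (g := fun L : EuclideanSpace ℝ (Fin d) →L[ℝ] ℝ => L (EuclideanSpace.single i (1:ℝ))) rfl
    exact hcont.integrable_of_hasCompactSupport hsupp
  rw [integral_finset_sum _ (fun i _ => hInt i)]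
  refine Finset.sum_eq_zero fun i _ => ?_
  exact aux_integral_fderiv_zero _ (hDiC i) (hDiS i) _
end
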